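/- arXiv:1509.03712 — 8 statements merged into one kernel-verified Lean document; each statement's English description precedes it below -/
import Mathlib

section
/- For every natural number k and every language L over a finite alphabet Σ, if L is recognized by a deterministic finite automaton with k-bit prefix advice, then L is recognized by a deterministic finite automaton with at most one inkdot of advice. -/
/-- The marked word: the i-th symbol of `w` becomes `(w_i, true)` if `i ∈ S`,
and `(w_i, false)` otherwise. -/
def markWord {α : Type*} (w : List α) (S : Finset ℕ) : List (α × Bool) :=
  w.zipIdx.map (fun p => (p.1, decide (p.2 ∈ S)))

/-- `L` is recognized by a deterministic finite automaton with at most `a n`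
inkdots of advice on inputs of length `n`. -/
def RecognizedWithInkdots {α : Type*} (L : Set (List α)) (a : ℕ → ℕ) : Prop :=
  ∃ (σ : Type) (_ : Fintype σ) (M : DFA (α × Bool) σ) (h : ℕ → Finset ℕ),
    (∀ n, ∀ i ∈ h n, i < n) ∧
    (∀ n, (h n).card ≤ a n) ∧
    (∀ w : List α, w ∈ L ↔ markWord w (h w.length) ∈ M.accepts)
/-- `L` is recognized by a deterministic finite automaton with `k`-bit prefix advice. -/
def RecognizedWithPrefixAdvice {α : Type*} (L : Set (List α)) (k : ℕ) : Prop :=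
  ∃ (σ : Type) (_ : Fintype σ) (M : DFA (Bool ⊕ α) σ) (h : ℕ → Fin k → Bool),
    ∀ w : List α, w ∈ L ↔
      ((List.ofFn (h w.length)).map Sum.inl ++ w.map Sum.inr) ∈ M.accepts

/-!
Prefix advice only selects the state in which the automaton starts reading the input proper, so
it suffices to replace start-state advice `q n` by one inkdot. With `N` the number of states,
fix an enumeration of the states by `Fin N`; on inputs of length `n ≥ N` put the inkdot at the
position numbering `q n`. The new automaton runs the old one from every state in parallel and
remembers the first `N` letters of the marked input: these reveal the inkdot's position, hence
the start state whose run decides acceptance, and on the finitely many lengths `n < N`, which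
carry no inkdot, they are the whole input, so membership in `L` is looked up directly.
-/

namespace DFA

variable {α σ : Type*}

def prefixRuns (M : DFA α σ) (N : ℕ) (P : List α → (σ → σ) → Prop) :
    DFA α ({l : List α // l.length ≤ N} × (σ → σ)) where
  step q a := (⟨(q.1.1 ++ [a]).take N, List.length_take_le _ _⟩, fun s => M.step (q.2 s) a)
  start := (⟨[], Nat.zero_le N⟩, id)
  accept := {q | P q.1.1 q.2}

theorem eval_prefixRuns (M : DFA α σ) (N : ℕ) (P : List α → (σ → σ) → Prop) (u : List α) :
    (M.prefixRuns N P).eval u =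
      (⟨u.take N, List.length_take_le _ _⟩, fun s => M.evalFrom s u) := by
  induction u using List.reverseRecOn with
  | nil => exact Prod.ext (Subtype.ext List.take_nil.symm) rfl
  | append_singleton u a ih =>
    rw [eval_append_singleton, ih]
    refine Prod.ext (Subtype.ext ?_) (funext fun s => (M.evalFrom_append_singleton s u a).symm)
    simp only [prefixRuns, List.take_append, List.take_take, List.length_take]
    rw [show N - min N u.length = N - u.length by omega, min_self]

theorem mem_accepts_prefixRuns (M : DFA α σ) (N : ℕ) (P : List α → (σ → σ) → Prop)
    (u : List α) :
    u ∈ (M.prefixRuns N P).accepts ↔ P (u.take N) fun s => M.evalFrom s u := by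
  rw [mem_accepts, eval_prefixRuns]
  rfl

end DFA

section markWord

variable {α : Type*} (w : List α) (S : Finset ℕ)

@[simp]
theorem length_markWord : (markWord w S).length = w.length := by
  simp [markWord]

@[simp]
theorem map_fst_markWord : (markWord w S).map Prod.fst = w := by
  simp [markWord, Function.comp_def, List.zipIdx_map_fst]

@[simp]
theorem getElem?_markWord (i : ℕ) :
    (markWord w S)[i]? = w[i]?.map fun a => (a, decide (i ∈ S)) := by
  simp [markWord, Function.comp_def, List.getElem?_zipIdx]

end markWord

theorem recognizedWithInkdots_one_of_acceptsFrom {α σ : Type} [Fintype α] [Fintype σ]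
    (M : DFA α σ) (q : ℕ → σ) (L : Set (List α))
    (hL : ∀ w, w ∈ L ↔ w ∈ M.acceptsFrom (q w.length)) :
    RecognizedWithInkdots L fun _ => 1 := by
  set N := Fintype.card σ
  let e := Fintype.equivFin σ
  let P : List (α × Bool) → (σ → σ) → Prop := fun v r =>
    (v.length < N ∧ v.map Prod.fst ∈ L) ∨
      ∃ i : Fin N, v[(i : ℕ)]?.map Prod.snd = some true ∧ r (e.symm i) ∈ M.accept
  have : Finite {l : List (α × Bool) // l.length ≤ N} := (List.finite_length_le _ N).to_subtype
  refine ⟨_, .ofFinite _, (M.comap Prod.fst).prefixRuns N P,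
    fun n => if N ≤ n then {(e (q n) : ℕ)} else ∅, fun n i hi => ?_, fun n => ?_, fun w => ?_⟩
  · dsimp only at hi
    split_ifs at hi with hn
    · rw [Finset.mem_singleton.mp hi]
      exact (e (q n)).isLt.trans_le hn
    · simp at hi
  · dsimp only
    split_ifs <;> simp
  · rw [DFA.mem_accepts_prefixRuns]
    simp only [P, DFA.evalFrom_comap, List.length_take, length_markWord, List.map_take,
      map_fst_markWord, List.getElem?_take, getElem?_markWord]
    by_cases hn : N ≤ w.length
    · have hlt (i : Fin N) : (i : ℕ) < w.length := i.isLt.trans_le hn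
      simp [hn, hlt, Fin.val_inj, hL w, DFA.mem_acceptsFrom]
    · simp [hn, List.take_of_length_le (not_le.mp hn).le]

/-- prefix advice of any constant number of bits can be replaced by
a single inkdot of advice. -/
theorem prefix_advice_subset_one_inkdot (k : ℕ) (α : Type) [Fintype α]
    (L : Set (List α)) (hL : RecognizedWithPrefixAdvice L k) :
    RecognizedWithInkdots L (fun _ => 1) := by
  obtain ⟨σ, _, M, h, hM⟩ := hL
  refine recognizedWithInkdots_one_of_acceptsFrom (M.comap Sum.inr)
    (fun n => M.eval ((List.ofFn (h n)).map Sum.inl)) L fun w => ?_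
  rw [hM, DFA.mem_accepts, DFA.mem_acceptsFrom, DFA.evalFrom_comap, DFA.eval,
    DFA.evalFrom_of_append]
  rfl
end

section
/- For every positive integer m, the language L_m = { (0^i 1^i)^⌈m/2⌉ (0^i)^(m+1−2⌈m/2⌉) : i > 0 } over {0,1} (the set of strings consisting of m+1 alternating equal-length segments of 0's and 1's, beginning with 0's) is not recognized by any deterministic finite automaton with at most m−1 inkdots of advice. -/
/-- The language `L_m = { (0^i 1^i)^⌈m/2⌉ (0^i)^(m+1-2⌈m/2⌉) : i > 0 }`:
`m+1` alternating equal-length segments of `0`s and `1`s, beginning with `0`s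
(`false` plays the role of `0` and `true` the role of `1`). -/
def Lm (m : ℕ) : Set (List Bool) :=
  { w | ∃ i : ℕ, 0 < i ∧
      w = (List.replicate ((m + 1) / 2)
              (List.replicate i false ++ List.replicate i true)).flatten ++
          (List.replicate (m + 1 - 2 * ((m + 1) / 2)) (List.replicate i false)).flatten }

/-!
Let the automaton have `c` states, put `D = c + c!`, and look at the word of `L_m` with blocks
of length `i = 2D`. Its `m` block borders have pairwise disjoint windows of radius `D`, so for
advice with fewer than `m` inkdots some window is inkdot-free, and there the automaton reads
`x^D y^D`. After `c` equal letters the run is on a cycle whose length divides `c!`, so the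
automaton cannot tell `x^D y^D` from `x^(D+c!) y^(D-c!)`: moving that border by `c!` gives a
word of the same length, hence with the same advice, which is not in `L_m` but is accepted.
-/

open Function Fintype Finset
open scoped Nat

theorem Function.iterate_card_mem_periodicPts {α : Type*} [Fintype α] (f : α → α) (x : α) :
    f^[card α] x ∈ periodicPts f := by
  obtain ⟨u, v, hne, huv⟩ :=
    Fintype.exists_ne_map_eq_of_card_lt (fun k : Fin (card α + 1) => f^[k] x) (by simp)
  wlog hlt : u < v generalizing u v
  · exact this v u hne.symm huv.symm (lt_of_le_of_ne (not_lt.1 hlt) hne.symm)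
  have hu : IsPeriodicPt f (v - u) (f^[u] x) := by
    rw [IsPeriodicPt, IsFixedPt, ← iterate_add_apply, Nat.sub_add_cancel hlt.le]
    exact huv.symm
  have := (hu.apply_iterate (card α - u))
  rw [← iterate_add_apply, Nat.sub_add_cancel (Nat.lt_succ_iff.1 u.2)] at this
  exact mk_mem_periodicPts (by omega) this

theorem Function.iterate_add_factorial_card {α : Type*} [Fintype α] (f : α → α) (x : α)
    {j : ℕ} (hj : card α ≤ j) : f^[j + (card α)!] x = f^[j] x := by
  obtain ⟨k, rfl⟩ := Nat.exists_eq_add_of_le hj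
  have hper := isPeriodicPt_factorial_card_of_mem_periodicPts (iterate_card_mem_periodicPts f x)
  rw [add_comm (card α), add_assoc, iterate_add_apply, iterate_add_apply f k, add_comm,
    iterate_add_apply, hper.eq]

theorem List.map_range_add_eq_replicate_append {α : Type*} {f : ℕ → α} {k l : ℕ} {x y : α}
    (hx : ∀ t < k, f t = x) (hy : ∀ t < l, f (k + t) = y) :
    (List.range (k + l)).map f = List.replicate k x ++ List.replicate l y := by
  rw [List.range_add, List.map_append, List.map_map]
  congr 1 <;> refine List.eq_replicate_iff.2 ⟨by simp, ?_⟩ <;> simpa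

theorem Finset.exists_mem_Icc_disjoint_Ico {S : Finset ℕ} {m i D : ℕ} (hS : #S < m)
    (hi : 2 * D ≤ i) : ∃ s ∈ Icc 1 m, Disjoint S (Ico (s * i - D) (s * i + D)) := by
  obtain ⟨s, hs, hsS⟩ := exists_mem_notMem_of_card_lt_card
    (s := S.image fun j => (j + D) / i) (t := Icc 1 m) (by simpa using card_image_le.trans_lt hS)
  refine ⟨s, hs, disjoint_left.2 fun j hj hjw => hsS (mem_image.2 ⟨j, hj, ?_⟩)⟩
  rw [mem_Ico] at hjw
  exact Nat.div_eq_of_lt_le (by omega) (by rw [Nat.succ_mul]; omega)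

namespace DFA

variable {α σ : Type*} (M : DFA α σ)

theorem evalFrom_replicate (s : σ) (a : α) (n : ℕ) :
    M.evalFrom s (List.replicate n a) = (M.step · a)^[n] s := by
  induction n generalizing s with
  | zero => rfl
  | succ n ih => exact ih (M.step s a)

theorem evalFrom_replicate_add_factorial_card [Fintype σ] (s : σ) (a : α) {n : ℕ}
    (hn : card σ ≤ n) :
    M.evalFrom s (List.replicate (n + (card σ)!) a) = M.evalFrom s (List.replicate n a) := by
  simp only [evalFrom_replicate, iterate_add_factorial_card _ _ hn]

theorem evalFrom_replicate_append_shift [Fintype σ] (s : σ) (a b : α) :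
    M.evalFrom s (List.replicate (card σ + 2 * (card σ)!) a ++ List.replicate (card σ) b) =
      M.evalFrom s (List.replicate (card σ + (card σ)!) a ++
        List.replicate (card σ + (card σ)!) b) := by
  rw [evalFrom_of_append, evalFrom_of_append, two_mul, ← add_assoc,
    evalFrom_replicate_add_factorial_card _ _ _ (by omega),
    evalFrom_replicate_add_factorial_card _ _ _ le_rfl,
    evalFrom_replicate_add_factorial_card _ _ _ le_rfl]

theorem evalFrom_map_range_congr_window {F G : ℕ → α} {a l n : ℕ} (hn : a + l ≤ n)
    (hout : ∀ j, j < a ∨ a + l ≤ j → F j = G j)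
    (hwin : ∀ s, M.evalFrom s ((List.range l).map (F <| a + ·)) =
      M.evalFrom s ((List.range l).map (G <| a + ·))) (s : σ) :
    M.evalFrom s ((List.range n).map F) = M.evalFrom s ((List.range n).map G) := by
  obtain ⟨r, rfl⟩ := Nat.exists_eq_add_of_le hn
  simp only [List.range_add, List.map_append, List.map_map, Function.comp_def, evalFrom_of_append]
  rw [List.map_congr_left (fun j hj => hout j (.inl (List.mem_range.1 hj))), hwin,
    List.map_congr_left (l := List.range r) (fun j _ => hout _ (.inr (by omega)))]

end DFA

theorem markWord_map_range {α : Type*} (f : ℕ → α) (n : ℕ) (S : Finset ℕ) :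
    markWord ((List.range n).map f) S = (List.range n).map fun j => (f j, decide (j ∈ S)) := by
  refine List.ext_getElem (by simp [markWord]) fun j _ _ => ?_
  simp [markWord]

def blockWord (i n : ℕ) : List Bool :=
  (List.range n).map fun j => (j / i).bodd

@[simp]
theorem length_blockWord (i n : ℕ) : (blockWord i n).length = n := by
  simp [blockWord]

theorem blockWord_succ_mul (i k : ℕ) :
    blockWord i ((k + 1) * i) = blockWord i (k * i) ++ List.replicate i k.bodd := by
  rw [blockWord, Nat.succ_mul, List.range_add, List.map_append, List.map_map]
  congr 1
  refine List.eq_replicate_iff.2 ⟨by simp, fun x hx => ?_⟩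
  obtain ⟨t, ht, rfl⟩ := List.mem_map.1 hx
  have ht : t < i := List.mem_range.1 ht
  simp only [Function.comp_apply]
  rw [Nat.div_eq_of_lt_le (k := k) (by omega) (by rw [Nat.succ_mul]; omega)]

theorem flatten_replicate_blocks (i K : ℕ) :
    (List.replicate K (List.replicate i false ++ List.replicate i true)).flatten =
      blockWord i (2 * K * i) := by
  induction K with
  | zero => simp [blockWord]
  | succ K ih =>
    rw [List.replicate_succ', List.flatten_append, ih, show 2 * (K + 1) = 2 * K + 1 + 1 by ring,
      blockWord_succ_mul, blockWord_succ_mul]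
    simp [Nat.bodd_mul]

theorem mem_Lm_iff {m : ℕ} {w : List Bool} :
    w ∈ Lm m ↔ ∃ i, 0 < i ∧ w = blockWord i ((m + 1) * i) := by
  suffices h : ∀ i, (List.replicate ((m + 1) / 2)
      (List.replicate i false ++ List.replicate i true)).flatten ++
      (List.replicate (m + 1 - 2 * ((m + 1) / 2)) (List.replicate i false)).flatten =
      blockWord i ((m + 1) * i) by
    simp only [Lm, Set.mem_ofPred_eq, h]
  intro i
  set K := (m + 1) / 2
  rw [flatten_replicate_blocks]
  obtain h | h : m + 1 = 2 * K ∨ m + 1 = 2 * K + 1 := by omega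
  · rw [h]; simp
  · rw [h, Nat.add_sub_cancel_left, blockWord_succ_mul]; simp [Nat.bodd_mul]

theorem Lm_eq_of_length_eq {m : ℕ} {u v : List Bool} (hu : u ∈ Lm m) (hv : v ∈ Lm m)
    (huv : u.length = v.length) : u = v := by
  obtain ⟨i, -, rfl⟩ := mem_Lm_iff.1 hu
  obtain ⟨j, -, rfl⟩ := mem_Lm_iff.1 hv
  simp only [length_blockWord] at huv
  rw [Nat.eq_of_mul_eq_mul_left m.succ_pos huv]

/-- `blockWord i n` with the block border at `b` moved `p` places to the right. -/
def blockWordShift (i n b p : ℕ) : List Bool :=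
  (List.range n).map fun j => ((if b ≤ j ∧ j < b + p then b - 1 else j) / i).bodd

@[simp]
theorem length_blockWordShift (i n b p : ℕ) : (blockWordShift i n b p).length = n := by
  simp [blockWordShift]

theorem blockWordShift_ne_blockWord {i n s p : ℕ} (hi : 0 < i) (hs : 1 ≤ s) (hp : 0 < p)
    (hn : s * i < n) : blockWordShift i n (s * i) p ≠ blockWord i n := by
  obtain ⟨t, rfl⟩ : ∃ t, s = t + 1 := ⟨s - 1, by omega⟩
  intro h
  have := congrArg (·[(t + 1) * i]?) h
  simp only [blockWord, blockWordShift, List.getElem?_map, List.getElem?_range hn,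
    Option.map_some, Option.some.injEq] at this
  have hb : (t + 1) * i = t * i + i := Nat.succ_mul t i
  rw [if_pos ⟨le_rfl, by omega⟩, Nat.mul_div_cancel _ hi, Nat.bodd_succ,
    Nat.div_eq_of_lt_le (k := t) (by omega) (by omega)] at this
  simp at this

theorem DFA.eval_markWord_blockWordShift {σ : Type*} [Fintype σ] (M : DFA (Bool × Bool) σ)
    {S : Finset ℕ} {i s n : ℕ} (hi : 2 * (card σ + (card σ)!) ≤ i) (hs : 1 ≤ s)
    (hn : s * i + (card σ + (card σ)!) ≤ n)
    (hS : Disjoint S (Ico (s * i - (card σ + (card σ)!)) (s * i + (card σ + (card σ)!)))) :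
    M.eval (markWord (blockWordShift i n (s * i) (card σ)!) S) =
      M.eval (markWord (blockWord i n) S) := by
  set c := card σ
  set p := c.factorial
  set D := c + p
  obtain ⟨t, rfl⟩ : ∃ t, s = t + 1 := ⟨s - 1, by omega⟩
  have hb : (t + 1) * i = t * i + i := Nat.succ_mul t i
  have hdiv_left : ∀ j, (t + 1) * i - D ≤ j → j < (t + 1) * i → j / i = t := fun j h₁ h₂ =>
    Nat.div_eq_of_lt_le (by omega) h₂
  have hdiv_right : ∀ j, (t + 1) * i ≤ j → j < (t + 1) * i + D → j / i = t + 1 := fun j h₁ h₂ =>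
    Nat.div_eq_of_lt_le h₁ (by rw [Nat.succ_mul (t + 1)]; omega)
  have hmark : ∀ j, (t + 1) * i - D ≤ j → j < (t + 1) * i + D → j ∉ S := fun j h₁ h₂ hj =>
    disjoint_left.1 hS hj (mem_Ico.2 ⟨h₁, h₂⟩)
  simp only [DFA.eval, blockWord, blockWordShift, markWord_map_range]
  refine M.evalFrom_map_range_congr_window (a := (t + 1) * i - D) (l := c + 2 * p + c) (by omega)
    (fun j hj => ?_) (fun q => ?_) _
  · rw [if_neg (by omega)]
  rw [List.map_range_add_eq_replicate_append (x := (t.bodd, false)) (y := ((t + 1).bodd, false)),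
    show c + 2 * p + c = D + D by omega,
    List.map_range_add_eq_replicate_append (x := (t.bodd, false)) (y := ((t + 1).bodd, false)),
    DFA.evalFrom_replicate_append_shift]
  all_goals
    intro u hu
    simp only [Prod.mk.injEq, decide_eq_false_iff_not]
    refine ⟨?_, hmark _ (by omega) (by omega)⟩
  · rw [hdiv_left _ (by omega) (by omega)]
  · rw [hdiv_right _ (by omega) (by omega)]
  · split_ifs <;> rw [hdiv_left _ (by omega) (by omega)]
  · rw [if_neg (by omega), hdiv_right _ (by omega) (by omega)]

/-- `L_m` is not recognized by any dfa with at most `m-1` inkdots of advice. -/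
theorem Lm_not_mem_fewer_inkdots (m : ℕ) (hm : 0 < m) :
    ¬ RecognizedWithInkdots (Lm m) (fun _ => m - 1) := by
  rintro ⟨σ, _, M, h, -, hcard, hrec⟩
  set D := card σ + (card σ)!
  set i := 2 * D
  set n := (m + 1) * i
  have hi : 0 < i := by have := (card σ).factorial_pos; omega
  obtain ⟨s, hs, hS⟩ := exists_mem_Icc_disjoint_Ico (S := h n) (m := m)
    (by have := hcard n; dsimp only at this; omega) (le_refl i)
  rw [mem_Icc] at hs
  have hsn : s * i + i ≤ n := by rw [← Nat.succ_mul]; exact Nat.mul_le_mul_right _ (by omega)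
  have hw : blockWord i n ∈ Lm m := mem_Lm_iff.2 ⟨i, hi, rfl⟩
  have hw' : blockWordShift i n (s * i) (card σ)! ∉ Lm m := fun hw' =>
    blockWordShift_ne_blockWord hi hs.1 (card σ).factorial_pos (by omega)
      (Lm_eq_of_length_eq hw' hw (by simp))
  have hacc := (hrec _).1 hw
  rw [length_blockWord] at hacc
  refine hw' ((hrec _).2 ?_)
  rwa [length_blockWordShift, DFA.mem_accepts,
    M.eval_markWord_blockWordShift (by omega) hs.1 (by omega) hS]
end

section
/- Let f : ℕ → ℕ satisfy f(n) ≥ 1 for n ≥ 1, f(n) tends to infinity, and f(n)/n tends to 0, and set f'(n) = ⌈n/f(n)⌉. Then the language L_f = { w ∈ {0,1}^n : n ∈ ℕ, and for all 1 ≤ i ≤ n, the i-th symbol of w is 1 iff i is a positive multiple of f'(n) } is not a regular language, i.e., it is not recognized by any deterministic finite automaton (without advice). -/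
/-!
For large `n`, `p = ⌈n / f n⌉` exceeds the number of states of a putative automaton and
`2 p ≤ n`. The word of length `n` in `L_f` starts with `p - 1` zeros; pigeonholing the states
reached along these zeros lets one insert `t > 0` further zeros without changing acceptance.
The pumped word has ones at positions `t + p` and `t + 2 p`, so its period `q` divides `p` and
hence `t`; but then position `q ≤ t` lies in the block of zeros.
-/

/-- The language `L_f`: a word `w` of length `n` over `{0,1}` is a member iff for
every position `i` with `1 ≤ i ≤ n`, the `i`-th symbol of `w` (1-based) is `1`
exactly when `i` is a positive multiple of `f' n` (`false` plays the role of `0`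
and `true` the role of `1`). -/
def Lf (f' : ℕ → ℕ) : Set (List Bool) :=
  { w | ∀ i : ℕ, 1 ≤ i → i ≤ w.length →
      (w.getD (i - 1) false = true ↔ ∃ k : ℕ, 0 < k ∧ i = k * f' w.length) }

open Filter Topology List

theorem DFA.exists_eval_replicate_add_eq {α σ : Type*} [Fintype σ] (M : DFA α σ) (a : α)
    {m : ℕ} (hm : Fintype.card σ ≤ m) :
    ∃ t, 0 < t ∧ M.eval (replicate (t + m) a) = M.eval (replicate m a) := by
  obtain ⟨i, j, hne, heq⟩ := Fintype.exists_ne_map_eq_of_card_lt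
    (fun i : Fin (Fintype.card σ + 1) => M.eval (replicate i a)) (by simp)
  wlog hij : i < j generalizing i j
  · exact this j i hne.symm heq.symm (lt_of_le_of_ne (not_lt.mp hij) hne.symm)
  have hjm : (j : ℕ) ≤ m := by omega
  refine ⟨j - i, by omega, ?_⟩
  have hsplit : ∀ k, k ≤ m → replicate m a = replicate k a ++ replicate (m - k) a := by
    intro k hk
    rw [← replicate_add, Nat.add_sub_cancel' hk]
  rw [show j - i + m = j + (m - i) by omega, replicate_add, hsplit i (by omega)]
  unfold DFA.eval at heq ⊢
  rw [DFA.evalFrom_of_append, DFA.evalFrom_of_append]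
  exact congrArg (M.evalFrom · _) heq.symm

theorem DFA.append_mem_accepts_iff_of_eval_eq {α σ : Type*} (M : DFA α σ) {x x' : List α}
    (h : M.eval x = M.eval x') (y : List α) : x ++ y ∈ M.accepts ↔ x' ++ y ∈ M.accepts := by
  rw [DFA.mem_accepts, DFA.mem_accepts]
  unfold DFA.eval at h ⊢
  rw [DFA.evalFrom_of_append, DFA.evalFrom_of_append, h]

theorem two_mul_ceilDiv_le {n q : ℕ} (hq : 3 ≤ q) (hn : 2 ≤ n) : 2 * (n ⌈/⌉ q) ≤ n := by
  have : n ⌈/⌉ q ≤ n / 2 := by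
    rw [ceilDiv_le_iff_le_mul (by omega)]
    calc n ≤ 3 * (n / 2) := by omega
      _ ≤ q * (n / 2) := Nat.mul_le_mul_right _ hq
  omega

theorem eventually_lt_ceilDiv {f : ℕ → ℕ} (hpos : ∀ᶠ n in atTop, 0 < f n)
    (hf : Tendsto (fun n => (f n : ℝ) / n) atTop (𝓝 0)) (C : ℕ) :
    ∀ᶠ n in atTop, C < n ⌈/⌉ f n := by
  have hC : (0 : ℝ) < 1 / (C + 1) := by positivity
  filter_upwards [hpos, eventually_gt_atTop 0, hf.eventually (gt_mem_nhds hC)] with n hfn hn hlt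
  rw [← not_le, ceilDiv_le_iff_le_mul hfn]
  intro hle
  rw [div_lt_div_iff₀ (by positivity) (by positivity)] at hlt
  have : (n : ℝ) ≤ f n * C := by exact_mod_cast hle
  nlinarith

-- `j` is a 0-based index: the letter at 1-based position `i` is `1` iff `p ∣ i`.
def multiplesWord (p n : ℕ) : List Bool := (range n).map fun j => decide (p ∣ j + 1)

@[simp]
theorem length_multiplesWord (p n : ℕ) : (multiplesWord p n).length = n := by
  simp [multiplesWord]

@[simp]
theorem getElem_multiplesWord {p n j : ℕ} (h : j < (multiplesWord p n).length) :
    (multiplesWord p n)[j] = decide (p ∣ j + 1) := by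
  simp [multiplesWord]

theorem getElem?_multiplesWord {p n j : ℕ} (h : j < n) :
    (multiplesWord p n)[j]? = some (decide (p ∣ j + 1)) := by
  simp [multiplesWord, h]

theorem take_multiplesWord {k p n : ℕ} (hkp : k < p) (hkn : k ≤ n) :
    take k (multiplesWord p n) = replicate k false := by
  refine eq_replicate_iff.mpr ⟨by simpa using hkn, fun b hb => ?_⟩
  obtain ⟨j, hj, rfl⟩ := getElem_of_mem hb
  rw [length_take] at hj
  rw [getElem_take, getElem_multiplesWord, decide_eq_false_iff_not]
  exact Nat.not_dvd_of_pos_of_lt j.succ_pos (by omega)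

theorem replicate_append_multiplesWord_ne {t p n : ℕ} (ht : 0 < t) (hp : 0 < p)
    (h2p : 2 * p ≤ n) (q : ℕ) :
    replicate t false ++ multiplesWord p n ≠ multiplesWord q (t + n) := by
  intro h
  have hdvd_shift : ∀ m, 0 < m → m ≤ n → p ∣ m → q ∣ t + m := by
    intro m hm hmn hpm
    have := congrArg (·[t + m - 1]?) h
    rw [getElem?_append_right (by simp; omega), length_replicate,
      getElem?_multiplesWord (by omega), getElem?_multiplesWord (by omega),
      Nat.sub_add_cancel (by omega), show t + m - 1 - t + 1 = m by omega] at this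
    simpa [hpm] using this
  have hqp : q ∣ p := by
    refine (Nat.dvd_add_right (hdvd_shift p hp (by omega) dvd_rfl)).mp ?_
    simpa [two_mul, add_assoc] using hdvd_shift (2 * p) (by omega) h2p (dvd_mul_left p 2)
  have hqt : q ∣ t := (Nat.dvd_add_left hqp).mp (hdvd_shift p hp (by omega) dvd_rfl)
  have hq : 0 < q := Nat.pos_of_dvd_of_pos hqt ht
  have hq_le : q ≤ t := Nat.le_of_dvd ht hqt
  have := congrArg (·[q - 1]?) h
  rw [getElem?_append_left (by simp; omega), getElem?_replicate_of_lt (by omega),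
    getElem?_multiplesWord (by omega), Nat.sub_add_cancel hq] at this
  simp at this

theorem exists_pos_mul_eq_iff_dvd {i q : ℕ} (hi : 0 < i) :
    (∃ k, 0 < k ∧ i = k * q) ↔ q ∣ i := by
  constructor
  · rintro ⟨k, -, rfl⟩
    exact dvd_mul_left q k
  · rintro ⟨k, rfl⟩
    exact ⟨k, Nat.pos_of_mul_pos_left hi, mul_comm q k⟩

theorem multiplesWord_mem_Lf (g : ℕ → ℕ) (n : ℕ) : multiplesWord (g n) n ∈ Lf g := by
  intro i hi1 hin
  rw [length_multiplesWord] at hin ⊢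
  rw [getD_eq_getElem _ _ (by simp; omega), getElem_multiplesWord, Nat.sub_add_cancel hi1,
    decide_eq_true_iff, exists_pos_mul_eq_iff_dvd hi1]

theorem mem_Lf_iff {g : ℕ → ℕ} {w : List Bool} :
    w ∈ Lf g ↔ w = multiplesWord (g w.length) w.length := by
  refine ⟨fun hw => ?_, fun hw => hw ▸ multiplesWord_mem_Lf g w.length⟩
  refine ext_getElem (length_multiplesWord _ _).symm fun j hj _ => ?_
  have := hw (j + 1) (by omega) hj
  rw [Nat.add_sub_cancel, getD_eq_getElem _ _ hj, exists_pos_mul_eq_iff_dvd (by omega)] at this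
  rw [getElem_multiplesWord, Bool.eq_iff_iff, this, decide_eq_true_iff]

open Filter in
theorem Lf_not_regular_general (f : ℕ → ℕ)
    (hf1 : Tendsto f atTop atTop)
    (hf2 : Tendsto (fun n => (f n : ℝ) / n) atTop (nhds 0)) :
    ¬ ∃ (σ : Type) (_ : Fintype σ) (M : DFA Bool σ),
        ∀ w : List Bool, w ∈ Lf (fun n => n ⌈/⌉ f n) ↔ w ∈ M.accepts := by
  rintro ⟨σ, _, M, hM⟩
  obtain ⟨n, hf3, hn, hcard⟩ := ((hf1.eventually_ge_atTop 3).and ((eventually_ge_atTop 2).and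
    (eventually_lt_ceilDiv (hf1.eventually_gt_atTop 0) hf2 (Fintype.card σ)))).exists
  set p := n ⌈/⌉ f n
  have h2p : 2 * p ≤ n := two_mul_ceilDiv_le hf3 hn
  have hsplit :
      replicate (p - 1) false ++ drop (p - 1) (multiplesWord p n) = multiplesWord p n := by
    rw [← take_multiplesWord (p := p) (n := n) (by omega) (by omega), take_append_drop]
  obtain ⟨t, ht, heval⟩ := M.exists_eval_replicate_add_eq false (m := p - 1) (by omega)
  have hpumped : replicate t false ++ multiplesWord p n ∈ M.accepts := by
    rw [← hsplit, ← append_assoc, ← replicate_add, M.append_mem_accepts_iff_of_eval_eq heval,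
      hsplit, ← hM]
    exact multiplesWord_mem_Lf _ n
  rw [← hM, mem_Lf_iff, length_append, length_replicate, length_multiplesWord] at hpumped
  exact replicate_append_multiplesWord_ne ht (by omega) h2p _ hpumped

open Filter in
/-- for `f ∈ ω(1) ∩ o(n)` with `f(n) ≥ 1` for `n ≥ 1`, the language
`L_f` (with `f'(n) = ⌈n / f(n)⌉`) is not regular: no (unadvised) dfa recognizes it. -/
theorem Lf_not_regular (f : ℕ → ℕ)
    (hf0 : ∀ n, 1 ≤ n → 1 ≤ f n)
    (hf1 : Tendsto f atTop atTop)
    (hf2 : Tendsto (fun n => (f n : ℝ) / n) atTop (nhds 0)) :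
    ¬ ∃ (σ : Type) (_ : Fintype σ) (M : DFA Bool σ),
        ∀ w : List Bool, w ∈ Lf (fun n => n ⌈/⌉ f n) ↔ w ∈ M.accepts :=
  Lf_not_regular_general f hf1 hf2
end

section
/- For every integer k > 1, every deterministic finite automaton (without advice) whose accepted language equals LANG_k = { w ∈ {0,1}* : |w| < k, or the (i+1)-st symbol of w equals 1 where i = |w| mod k } has at least 2^k states. -/
/-!
Reading a word `x` of length `k` and then `i < k` zeros gives a word of length `k + i`, which lies
in `LANG k` exactly when the letter of `x` at index `i` is `1`. So the `2 ^ k` words of length `k` have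
pairwise distinct left quotients in `LANG k`, and a DFA must reach pairwise distinct states on them.
-/

/-- The `(i+1)`-st symbol is the one at 0-based index `i`; `true` encodes `1`. -/
def LANG (k : ℕ) : Set (List Bool) :=
  { w | w.length < k ∨ w.getD (w.length % k) false = true }

namespace DFA

variable {α σ ι : Type*}

theorem card_le_card_of_injective_leftQuotient [Fintype σ] [Fintype ι] (M : DFA α σ)
    {f : ι → List α} (hf : Function.Injective (M.accepts.leftQuotient ∘ f)) :
    Fintype.card ι ≤ Fintype.card σ := by
  rw [Language.leftQuotient_accepts] at hf
  exact Fintype.card_le_of_injective (M.eval ∘ f) (hf.of_comp (f := M.acceptsFrom))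

end DFA

theorem ofFn_append_replicate_mem_LANG_iff {k : ℕ} (b : Fin k → Bool) (i : Fin k) :
    List.ofFn b ++ List.replicate i false ∈ LANG k ↔ b i = true := by
  have hmod : (k + (i : ℕ)) % k = i := by rw [Nat.add_mod_left, Nat.mod_eq_of_lt i.isLt]
  simp only [LANG, Set.mem_ofPred_eq, List.length_append, List.length_ofFn, List.length_replicate,
    hmod, List.getD_append _ _ _ _ (by simp [i.isLt] : (i : ℕ) < (List.ofFn b).length),
    List.getD_eq_getElem _ _ (by simp [i.isLt] : (i : ℕ) < (List.ofFn b).length),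
    List.getElem_ofFn]
  exact or_iff_right (by omega)

theorem injective_leftQuotient_LANG_ofFn (k : ℕ) :
    Function.Injective (Language.leftQuotient (LANG k) ∘ List.ofFn (n := k)) := by
  intro b₁ b₂ h
  funext i
  have hi : List.ofFn b₁ ++ List.replicate i false ∈ LANG k ↔
      List.ofFn b₂ ++ List.replicate i false ∈ LANG k :=
    Iff.of_eq (congrArg (List.replicate (i : ℕ) false ∈ ·) h)
  rw [ofFn_append_replicate_mem_LANG_iff, ofFn_append_replicate_mem_LANG_iff] at hi
  exact Bool.eq_iff_iff.mpr hi

theorem LANG_unadvised_lower_bound_general (k : ℕ)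
    (σ : Type) [Fintype σ] (M : DFA Bool σ)
    (hM : ∀ w : List Bool, w ∈ M.accepts ↔ w ∈ LANG k) :
    2 ^ k ≤ Fintype.card σ := by
  have hL : M.accepts = LANG k := Set.ext hM
  calc 2 ^ k = Fintype.card (Fin k → Bool) := by simp
    _ ≤ Fintype.card σ :=
      M.card_le_card_of_injective_leftQuotient (hL ▸ injective_leftQuotient_LANG_ofFn k)

/-- any unadvised dfa recognizing `LANG_k` has at least `2^k` states. -/
theorem LANG_unadvised_lower_bound (k : ℕ) (hk : 1 < k)
    (σ : Type) [Fintype σ] (M : DFA Bool σ)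
    (hM : ∀ w : List Bool, w ∈ M.accepts ↔ w ∈ LANG k) :
    2 ^ k ≤ Fintype.card σ :=
  LANG_unadvised_lower_bound_general k σ M hM
end

section
/- For every integer k > 1, there is a deterministic finite automaton with exactly k+3 states that recognizes LANG_k = { w ∈ {0,1}* : |w| < k, or the (i+1)-st symbol of w equals 1 where i = |w| mod k } with the help of k-bit prefix advice. -/
namespace LangAdvice

open Sum

section Advice

def advice (k n : ℕ) (p : Fin k) : Bool := decide (k ≤ n ∧ p.val = n % k)

variable {k : ℕ}

theorem ofFn_advice_of_lt {n : ℕ} (hn : n < k) :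
    List.ofFn (advice k n) = List.replicate k false := by
  rw [← List.ofFn_const]
  exact congrArg List.ofFn (funext fun _ => by simp [advice, Nat.not_le.mpr hn])

theorem ofFn_advice_of_le [NeZero k] {n : ℕ} (hn : k ≤ n) :
    List.ofFn (advice k n) =
      List.replicate (n % k) false ++ true :: List.replicate (k - 1 - n % k) false := by
  have hi := Nat.mod_lt n (NeZero.pos k)
  apply List.ext_getElem
  · simp only [List.length_ofFn, List.length_append, List.length_replicate, List.length_cons]
    omega
  · intro p _ _
    simp only [advice, List.getElem_ofFn, hn, true_and, List.getElem_append, List.length_replicate,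
      List.getElem_replicate, List.getElem_cons]
    split_ifs <;> simp <;> omega

end Advice

variable (k : ℕ) [NeZero k]

/-- `inl none` waits for the marker, `inl (some j)` has `j` more symbols to skip,
and `inr b` is the absorbing verdict `b`. -/
abbrev State := Option (Fin k) ⊕ Bool

def step : State k → Bool ⊕ Bool → State k
  | inl none, inl true => inl (some ⟨k - 1, Nat.sub_one_lt (NeZero.ne k)⟩)
  | inl none, _ => inl none
  | inl (some ⟨j + 1, hj⟩), _ => inl (some ⟨j, by omega⟩)
  | inl (some ⟨0, _⟩), inr b => inr b
  | inl (some ⟨0, _⟩), inl _ => inr false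
  | inr b, _ => inr b

def dfa : DFA (Bool ⊕ Bool) (State k) where
  step := step k
  start := inl none
  accept := {inl none, inr true}

variable {k}

theorem evalFrom_waiting (l : List (Bool ⊕ Bool)) (hl : inl true ∉ l) :
    (dfa k).evalFrom (inl none) l = inl none := by
  induction l with
  | nil => rfl
  | cons x l ih =>
    rw [List.mem_cons, not_or] at hl
    rcases x with (_ | _) | _
    · exact ih hl.2
    · exact absurd rfl hl.1
    · exact ih hl.2

theorem evalFrom_verdict (b : Bool) (l : List (Bool ⊕ Bool)) :
    (dfa k).evalFrom (inr b) l = inr b := by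
  induction l with
  | nil => rfl
  | cons x l ih => exact ih

theorem evalFrom_countdown {j : ℕ} (hj : j < k) (l r : List (Bool ⊕ Bool)) (hl : l.length = j)
    (b : Bool) : (dfa k).evalFrom (inl (some ⟨j, hj⟩)) (l ++ inr b :: r) = inr b := by
  subst hl
  induction l with
  | nil => exact evalFrom_verdict b r
  | cons x l ih => exact ih (Nat.lt_of_succ_lt hj)

theorem eval_of_length_lt (w : List Bool) (hw : w.length < k) :
    (dfa k).eval ((List.ofFn (advice k w.length)).map inl ++ w.map inr) = inl none :=
  evalFrom_waiting _ (by simp [ofFn_advice_of_lt hw])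

theorem eval_of_le_length (w : List Bool) (hw : k ≤ w.length) :
    (dfa k).eval ((List.ofFn (advice k w.length)).map inl ++ w.map inr) =
      inr (w.getD (w.length % k) false) := by
  set i := w.length % k
  have hik : i < k := Nat.mod_lt _ (NeZero.pos k)
  have hiw : i < w.length := hik.trans_le hw
  have hsplit : w.map (inr : Bool → Bool ⊕ Bool) =
      (w.take i).map inr ++ inr w[i] :: (w.drop (i + 1)).map inr := by
    rw [← List.map_cons, ← List.map_append, List.getElem_cons_drop, List.take_append_drop]
  have hinput : (List.ofFn (advice k w.length)).map inl ++ w.map inr =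
      (List.replicate i false).map inl ++ inl true ::
        (((List.replicate (k - 1 - i) false).map inl ++ (w.take i).map inr) ++
          inr w[i] :: (w.drop (i + 1)).map inr) := by
    rw [ofFn_advice_of_le hw, hsplit]
    simp only [List.map_append, List.map_cons, List.append_assoc, List.cons_append]
    rfl
  rw [DFA.eval, hinput, DFA.evalFrom_of_append]
  change (dfa k).evalFrom ((dfa k).evalFrom (inl none) _) _ = _
  rw [evalFrom_waiting _ (by simp), DFA.evalFrom_cons, List.getD_eq_getElem _ _ hiw]
  exact evalFrom_countdown _ _ _ (by simp; omega) _

end LangAdvice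

open LangAdvice in
/-- `LANG_k` is recognized by a dfa with exactly `k+3` states with the
help of `k`-bit prefix advice. -/
theorem LANG_prefix_advice_upper_bound (k : ℕ) (hk : 1 < k) :
    ∃ (σ : Type) (inst : Fintype σ) (M : DFA (Bool ⊕ Bool) σ) (h : ℕ → Fin k → Bool),
      @Fintype.card σ inst = k + 3 ∧
      ∀ w : List Bool, w ∈ LANG k ↔
        ((List.ofFn (h w.length)).map Sum.inl ++ w.map Sum.inr) ∈ M.accepts := by
  have : NeZero k := ⟨by omega⟩
  refine ⟨State k, inferInstance, dfa k, advice k, by simp [State], fun w => ?_⟩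
  rw [DFA.mem_accepts]
  rcases lt_or_ge w.length k with hw | hw
  · rw [eval_of_length_lt w hw]
    simp [LANG, hw, dfa]
  · rw [eval_of_le_length w hw]
    simp [LANG, Nat.not_lt.mpr hw, dfa]
end

section
/- For every integer k > 1, there is a deterministic finite automaton with exactly 2 states that recognizes LANG_k = { w ∈ {0,1}* : |w| < k, or the (i+1)-st symbol of w equals 1 where i = |w| mod k } with at most one inkdot of advice. -/
/-!
A two-state automaton that stores the bit under the most recent inkdot (starting in the
accepting state `true`) accepts exactly the unmarked words and those whose marked bit is `1`.
For `|w| < k` the advice places no inkdot, and otherwise it places one at position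
`|w| mod k`, which is then the bit `LANG k` asks about.
-/

def inkReader : DFA (Bool × Bool) Bool where
  step s c := if c.2 then c.1 else s
  start := true
  accept := {true}

def langAdvice (k n : ℕ) : Finset ℕ := if n < k then ∅ else {n % k}

lemma inkReader_evalFrom_unmarked (w : List (Bool × Bool)) (hw : ∀ c ∈ w, c.2 = false)
    (s : Bool) : inkReader.evalFrom s w = s := by
  induction w generalizing s with
  | nil => rfl
  | cons c w ih =>
    simp only [List.mem_cons, forall_eq_or_imp] at hw
    rw [DFA.evalFrom_cons, ih hw.2]
    simp [inkReader, hw.1]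

lemma inkReader_evalFrom_zipIdx_mark (w : List Bool) (i j : ℕ) (s : Bool) :
    inkReader.evalFrom s ((w.zipIdx i).map fun p => (p.1, decide (p.2 = j))) =
      if i ≤ j ∧ j < i + w.length then w.getD (j - i) false else s := by
  induction w generalizing i s with
  | nil => simp only [List.zipIdx_nil, List.map_nil, DFA.evalFrom_nil]; grind
  | cons a w ih =>
    simp only [List.zipIdx_cons, List.map_cons, DFA.evalFrom_cons, ih]
    rcases eq_or_ne i j with rfl | hij
    · rw [if_neg (by omega)]
      have hi : i ≤ i ∧ i < i + (w.length + 1) := by omega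
      simp [inkReader, hi]
    · simp only [inkReader, hij, decide_false, Bool.false_eq_true, if_false, List.length_cons]
      by_cases hj : i + 1 ≤ j ∧ j < i + 1 + w.length
      · rw [if_pos hj, if_pos (by omega), show j - i = j - (i + 1) + 1 by omega]
        simp
      · rw [if_neg hj, if_neg (by omega)]

lemma inkReader_evalFrom_markWord_singleton {w : List Bool} {j : ℕ} (hj : j < w.length)
    (s : Bool) : inkReader.evalFrom s (markWord w {j}) = w[j] := by
  simp only [markWord, Finset.mem_singleton]
  rw [inkReader_evalFrom_zipIdx_mark, if_pos (by omega)]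
  simp [hj]

lemma langAdvice_lt {k : ℕ} (hk : 0 < k) (n : ℕ) : ∀ i ∈ langAdvice k n, i < n := by
  unfold langAdvice
  split_ifs with hn
  · simp
  · simpa using (Nat.mod_lt n hk).trans_le (not_lt.mp hn)

lemma card_langAdvice_le_one (k n : ℕ) : (langAdvice k n).card ≤ 1 := by
  unfold langAdvice
  split_ifs <;> simp

lemma mem_LANG_iff_inkReader_accepts {k : ℕ} (hk : 0 < k) (w : List Bool) :
    w ∈ LANG k ↔ markWord w (langAdvice k w.length) ∈ inkReader.accepts := by
  rw [DFA.mem_accepts, DFA.eval, LANG, Set.mem_ofPred_eq, langAdvice]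
  split_ifs with hn
  · rw [inkReader_evalFrom_unmarked _ (by simp [markWord])]
    simp [hn, inkReader]
  · have hi : w.length % k < w.length := (Nat.mod_lt _ hk).trans_le (not_lt.mp hn)
    rw [inkReader_evalFrom_markWord_singleton hi]
    simp [hn, hi, inkReader]

/-- `LANG_k` is recognized by a dfa with exactly `2` states with at most
one inkdot of advice. -/
theorem LANG_one_inkdot_two_states (k : ℕ) (hk : 1 < k) :
    ∃ (σ : Type) (inst : Fintype σ) (M : DFA (Bool × Bool) σ) (h : ℕ → Finset ℕ),
      @Fintype.card σ inst = 2 ∧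
      (∀ n, ∀ i ∈ h n, i < n) ∧
      (∀ n, (h n).card ≤ 1) ∧
      (∀ w : List Bool, w ∈ LANG k ↔ markWord w (h w.length) ∈ M.accepts) :=
  ⟨Bool, inferInstance, inkReader, langAdvice k, Fintype.card_bool,
    langAdvice_lt (by omega), card_langAdvice_le_one k,
    mem_LANG_iff_inkReader_accepts (by omega)⟩
end

section
/- The language L_3 = { 0^m 1^m 0^m 1^m : m > 0 } over {0,1} is recognized with bounded error by a deterministic finite automaton with randomized advice of at most 2 inkdots: there is a DFA M over {0,1} × Bool and, for each n, a probability distribution over sets of at most 2 positions in {0,…,n−1}, such that every member of L_3 is accepted with probability at least 2/3 (in fact with probability 1) and every non-member is rejected with probability at least 2/3. -/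
open scoped Classical in
/-- `L` is recognized with bounded error by a dfa with randomized advice of at most `k`
inkdots: for each input length `n` there is a finitely supported probability
distribution `D n` over inkdot patterns (sets of at most `k` positions in
`{0,…,n-1}`), such that members are accepted with probability at least `2/3` and
non-members are rejected with probability at least `2/3`. -/
def RecognizedWithRandomInkdots {α : Type*} (L : Set (List α)) (k : ℕ) : Prop :=
  ∃ (σ : Type) (_ : Fintype σ) (M : DFA (α × Bool) σ) (D : ℕ → (Finset ℕ →₀ NNReal)),
    (∀ n, (∑ S ∈ (D n).support, D n S) = 1) ∧
    (∀ n, ∀ S ∈ (D n).support, (∀ i ∈ S, i < n) ∧ S.card ≤ k) ∧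
    (∀ w : List α,
      (w ∈ L → (2 / 3 : NNReal) ≤ ∑ S ∈ (D w.length).support,
          (if markWord w S ∈ M.accepts then D w.length S else 0)) ∧
      (w ∉ L → (2 / 3 : NNReal) ≤ ∑ S ∈ (D w.length).support,
          (if markWord w S ∈ M.accepts then 0 else D w.length S)))

/-- The language `L_3 = { 0^m 1^m 0^m 1^m : m > 0 }` (`false` plays the role of `0`
and `true` the role of `1`). -/
def L3 : Set (List Bool) :=
  { w | ∃ m : ℕ, 0 < m ∧
      w = List.replicate m false ++ List.replicate m true ++
          List.replicate m false ++ List.replicate m true }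

/-!
The automaton checks that its input lies in `0⁺1⁺0⁺1⁺` and that every inkdot sits on the first
letter of the second, third or fourth block. On inputs of length `4m` the advice puts the two
inkdots on a uniformly random pair of the positions `m, 2m, 3m`, so every member of `L₃` is
accepted with certainty. If a word is accepted under two different pairs, then `m`, `2m` and `3m`
are all block starts, which forces the four blocks to have length `m`; so a non-member is accepted
under at most one of the three pairs. Inputs of any other length are rejected outright by an
inkdot on the first letter.
-/

open scoped Finset

section Marking

variable {α : Type*}

/-- `w` marked as the factor of a longer word that starts at position `k`. -/
def markWordFrom (w : List α) (S : Finset ℕ) (k : ℕ) : List (α × Bool) :=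
  (w.zipIdx k).map fun p => (p.1, decide (p.2 ∈ S))

@[simp]
theorem markWordFrom_nil (S : Finset ℕ) (k : ℕ) : markWordFrom ([] : List α) S k = [] :=
  rfl

@[simp]
theorem markWordFrom_cons (a : α) (w : List α) (S : Finset ℕ) (k : ℕ) :
    markWordFrom (a :: w) S k = (a, decide (k ∈ S)) :: markWordFrom w S (k + 1) :=
  rfl

theorem evalFrom_markWordFrom_replicate_append {σ : Type*} (M : DFA (α × Bool) σ) {p : σ}
    {b : α} (hloop : M.step p (b, false) = p) {S : Finset ℕ} (w : List α) :
    ∀ {n k : ℕ}, (∀ j ∈ S, j < k ∨ k + n ≤ j) →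
      M.evalFrom p (markWordFrom (List.replicate n b ++ w) S k) =
        M.evalFrom p (markWordFrom w S (k + n))
  | 0, k, _ => rfl
  | n + 1, k, hS => by
    have hk : k ∉ S := fun hk => by have := hS k hk; omega
    rw [List.replicate_succ, List.cons_append, markWordFrom_cons, DFA.evalFrom_cons,
      decide_eq_false hk, hloop, evalFrom_markWordFrom_replicate_append M hloop w
        (fun j hj => by have := hS j hj; omega), Nat.add_right_comm, Nat.add_assoc]

theorem evalFrom_markWordFrom_replicate_append_cons {σ : Type*} (M : DFA (α × Bool) σ)
    {p q : σ} {b b' : α} (hloop : M.step p (b, false) = p) (hexit : ∀ e, M.step p (b', e) = q)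
    {S : Finset ℕ} {n k : ℕ} (hS : ∀ j ∈ S, j < k ∨ k + n ≤ j) (w : List α) :
    M.evalFrom p (markWordFrom (List.replicate n b ++ b' :: w) S k) =
      M.evalFrom q (markWordFrom w S (k + n + 1)) := by
  rw [evalFrom_markWordFrom_replicate_append M hloop _ hS, markWordFrom_cons,
    DFA.evalFrom_cons, hexit]

end Marking

theorem List.replicate_append_cons_inj {α : Type*} {x y : α} (hxy : x ≠ y) {m n : ℕ}
    {l l' : List α} (h : replicate m x ++ y :: l = replicate n x ++ y :: l') :
    m = n ∧ l = l' := by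
  classical
  have idxOf_eq : ∀ k (t : List α), (replicate k x ++ y :: t).idxOf y = k := fun k t => by
    rw [idxOf_append_of_notMem (by simp [hxy.symm])]
    simp
  obtain rfl : m = n := by rw [← idxOf_eq m l, h, idxOf_eq]
  exact ⟨rfl, List.cons_injective (List.append_cancel_left h)⟩

theorem Finsupp.sum_support_indicator_ite {ι M : Type*} [AddCommMonoid M] (T : Finset ι)
    (c : M) (P : ι → Prop) [DecidablePred P] :
    ∑ i ∈ (Finsupp.indicator T fun _ _ => c).support,
        (if P i then Finsupp.indicator T (fun _ _ => c) i else 0) = #(T.filter P) • c := by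
  classical
  calc _ = ∑ i ∈ T, if P i then Finsupp.indicator T (fun _ _ => c) i else 0 :=
        Finset.sum_subset (Finsupp.support_indicator_subset T _)
          fun i _ hi => by simp [Finsupp.notMem_support_iff.1 hi]
    _ = ∑ i ∈ T.filter P, c := by
        rw [Finset.sum_filter]
        exact Finset.sum_congr rfl fun i hi => by simp [Finsupp.indicator_apply, hi]
    _ = #(T.filter P) • c := Finset.sum_const c

open scoped Classical in
theorem recognizedWithRandomInkdots_of_uniform {α : Type*} {L : Set (List α)} {k : ℕ}
    {σ : Type} [Fintype σ] (M : DFA (α × Bool) σ) (T : ℕ → Finset (Finset ℕ))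
    (hne : ∀ n, (T n).Nonempty) (hT : ∀ n, ∀ S ∈ T n, (∀ i ∈ S, i < n) ∧ #S ≤ k)
    (hmem : ∀ w ∈ L,
      2 * #(T w.length) ≤ 3 * #((T w.length).filter (markWord w · ∈ M.accepts)))
    (hnon : ∀ w ∉ L,
      2 * #(T w.length) ≤ 3 * #((T w.length).filter (markWord w · ∉ M.accepts))) :
    RecognizedWithRandomInkdots L k := by
  set D : ℕ → Finset ℕ →₀ NNReal :=
    fun n => Finsupp.indicator (T n) fun _ _ => (#(T n) : NNReal)⁻¹
  have prob_eq (n : ℕ) (P : Finset ℕ → Prop) [DecidablePred P] :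
      ∑ S ∈ (D n).support, (if P S then D n S else 0) = #((T n).filter P) / #(T n) := by
    rw [Finsupp.sum_support_indicator_ite, nsmul_eq_mul, div_eq_mul_inv]
  have two_thirds_le {a b : ℕ} (hb : 0 < b) (h : 2 * b ≤ 3 * a) :
      (2 / 3 : NNReal) ≤ a / b := by
    rw [div_le_div_iff₀ (by norm_num) (by exact_mod_cast hb)]
    exact_mod_cast (by omega : 2 * b ≤ a * 3)
  refine ⟨σ, inferInstance, M, D, fun n => ?_, fun n S hS => hT n S ?_,
    fun w => ⟨fun hw => ?_, fun hw => ?_⟩⟩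
  · have h := prob_eq n fun _ => True
    simp only [if_true] at h
    rw [h, Finset.filter_true_of_mem fun _ _ => trivial,
      div_self (a := (#(T n) : NNReal)) (by exact_mod_cast (hne n).card_pos.ne')]
  · exact Finsupp.support_indicator_subset _ _ hS
  · rw [prob_eq]
    exact two_thirds_le (hne _).card_pos (hmem w hw)
  · rw [Finset.sum_congr rfl fun S _ => (ite_not (markWord w S ∈ M.accepts) _ _).symm, prob_eq]
    exact two_thirds_le (hne _).card_pos (hnon w hw)

namespace L3

def fourBlocks (a b c d : ℕ) : List Bool :=
  List.replicate a false ++ List.replicate b true ++ List.replicate c false ++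
    List.replicate d true

theorem fourBlocks_succ (a b c d : ℕ) :
    fourBlocks a (b + 1) (c + 1) (d + 1) =
      List.replicate a false ++ true :: (List.replicate b true ++ false ::
        (List.replicate c false ++ true :: List.replicate d true)) := by
  simp [fourBlocks, List.replicate_succ]

theorem length_fourBlocks (a b c d : ℕ) : (fourBlocks a b c d).length = a + b + c + d := by
  simp [fourBlocks, Nat.add_assoc]

theorem fourBlocks_inj {a b c d a' b' c' d' : ℕ} (hb : 0 < b) (hc : 0 < c) (hd : 0 < d)
    (hb' : 0 < b') (hc' : 0 < c') (hd' : 0 < d')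
    (h : fourBlocks a b c d = fourBlocks a' b' c' d') :
    a = a' ∧ b = b' ∧ c = c' ∧ d = d' := by
  obtain ⟨b, rfl⟩ := Nat.exists_eq_add_one.mpr hb
  obtain ⟨c, rfl⟩ := Nat.exists_eq_add_one.mpr hc
  obtain ⟨d, rfl⟩ := Nat.exists_eq_add_one.mpr hd
  obtain ⟨b', rfl⟩ := Nat.exists_eq_add_one.mpr hb'
  obtain ⟨c', rfl⟩ := Nat.exists_eq_add_one.mpr hc'
  obtain ⟨d', rfl⟩ := Nat.exists_eq_add_one.mpr hd'
  rw [fourBlocks_succ, fourBlocks_succ] at h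
  obtain ⟨rfl, hbcd⟩ := List.replicate_append_cons_inj Bool.false_ne_true h
  obtain ⟨rfl, hcd⟩ := List.replicate_append_cons_inj Bool.false_ne_true.symm hbcd
  obtain ⟨rfl, hlast⟩ := List.replicate_append_cons_inj Bool.false_ne_true hcd
  simpa using congrArg List.length hlast

/-- State `p ∈ {1, 2, 3, 4}`: inside the `p`-th block of `0⁺1⁺0⁺1⁺`; `5` is a dead state.
An inkdot is tolerated only on the first letter of blocks 2, 3 and 4. -/
def step : Fin 6 → Bool × Bool → Fin 6
  | 0, (false, false) => 1
  | 1, (false, false) => 1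
  | 1, (true, _) => 2
  | 2, (true, false) => 2
  | 2, (false, _) => 3
  | 3, (false, false) => 3
  | 3, (true, _) => 4
  | 4, (true, false) => 4
  | _, _ => 5

def blockDFA : DFA (Bool × Bool) (Fin 6) where
  step := step
  start := 0
  accept := {4}

theorem evalFrom_dead (x : List (Bool × Bool)) : blockDFA.evalFrom 5 x = 5 := by
  induction x with
  | nil => rfl
  | cons y x ih =>
    rwa [DFA.evalFrom_cons, show blockDFA.step 5 y = 5 by rcases y with ⟨_ | _, _ | _⟩ <;> rfl]

variable {S : Finset ℕ}

theorem exists_replicate_append_cons_of_evalFrom {p : Fin 6} {b : Bool} (hp : p ≠ 4)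
    (hstep : ∀ c e, blockDFA.step p (c, e) = p ∧ c = b ∧ e = false ∨
      blockDFA.step p (c, e) = p + 1 ∧ c = !b ∨ blockDFA.step p (c, e) = 5) :
    ∀ (w : List Bool) (k : ℕ), blockDFA.evalFrom p (markWordFrom w S k) = 4 →
      ∃ n w', w = List.replicate n b ++ (!b) :: w' ∧ (∀ j ∈ S, j < k ∨ k + n ≤ j) ∧
        blockDFA.evalFrom (p + 1) (markWordFrom w' S (k + n + 1)) = 4
  | [], _, h => absurd h hp
  | c :: w, k, h => by
    rw [markWordFrom_cons, DFA.evalFrom_cons] at h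
    rcases hstep c (decide (k ∈ S)) with ⟨hloop, rfl, hk⟩ | ⟨hnext, rfl⟩ | hdead
    · obtain ⟨n, w', rfl, hS, h'⟩ :=
        exists_replicate_append_cons_of_evalFrom hp hstep w (k + 1) (by rwa [hloop] at h)
      refine ⟨n + 1, w', rfl, fun j hj => ?_, by rwa [Nat.add_right_comm k 1 n] at h'⟩
      have : j ≠ k := by rintro rfl; simp [hj] at hk
      have := hS j hj
      omega
    · exact ⟨0, w, by simp, fun j _ => by omega, by rwa [hnext] at h⟩
    · rw [hdead, evalFrom_dead] at h
      exact absurd h (by decide)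

theorem exists_eq_replicate_of_evalFrom_four :
    ∀ (w : List Bool) (k : ℕ), blockDFA.evalFrom 4 (markWordFrom w S k) = 4 →
      ∃ n, w = List.replicate n true ∧ ∀ j ∈ S, j < k ∨ k + n ≤ j
  | [], _, _ => ⟨0, rfl, fun j _ => by omega⟩
  | c :: w, k, h => by
    rw [markWordFrom_cons, DFA.evalFrom_cons] at h
    have hstep : ∀ c e, blockDFA.step 4 (c, e) = 4 ∧ c = true ∧ e = false ∨
        blockDFA.step 4 (c, e) = 5 := by decide
    rcases hstep c (decide (k ∈ S)) with ⟨hloop, rfl, hk⟩ | hdead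
    · obtain ⟨n, rfl, hS⟩ :=
        exists_eq_replicate_of_evalFrom_four w (k + 1) (by rwa [hloop] at h)
      refine ⟨n + 1, rfl, fun j hj => ?_⟩
      have : j ≠ k := by rintro rfl; simp [hj] at hk
      have := hS j hj
      omega
    · rw [hdead, evalFrom_dead] at h
      exact absurd h (by decide)

theorem exists_fourBlocks_of_mem_accepts {w : List Bool}
    (h : markWord w S ∈ blockDFA.accepts) :
    ∃ a b c d, 0 < a ∧ 0 < b ∧ 0 < c ∧ 0 < d ∧ w = fourBlocks a b c d ∧
      ∀ i ∈ S, i < w.length → i = a ∨ i = a + b ∨ i = a + b + c := by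
  replace h : blockDFA.evalFrom 0 (markWordFrom w S 0) = 4 := h
  obtain _ | ⟨c, w⟩ := w
  · rw [markWordFrom_nil, DFA.evalFrom_nil] at h
    exact absurd h (by decide)
  have hstart : ∀ c e, blockDFA.step 0 (c, e) = 1 ∧ c = false ∧ e = false ∨
      blockDFA.step 0 (c, e) = 5 := by decide
  rw [markWordFrom_cons, DFA.evalFrom_cons] at h
  rcases hstart c (decide (0 ∈ S)) with ⟨h1, rfl, h0⟩ | hdead
  swap
  · rw [hdead, evalFrom_dead] at h
    exact absurd h (by decide)
  rw [h1] at h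
  obtain ⟨a, w, rfl, hS₁, h⟩ :=
    exists_replicate_append_cons_of_evalFrom (b := false) (by decide) (by decide) _ _ h
  obtain ⟨b, w, rfl, hS₂, h⟩ :=
    exists_replicate_append_cons_of_evalFrom (b := true) (by decide) (by decide) _ _ h
  obtain ⟨c, w, rfl, hS₃, h⟩ :=
    exists_replicate_append_cons_of_evalFrom (b := false) (by decide) (by decide) _ _ h
  obtain ⟨d, rfl, hS₄⟩ := exists_eq_replicate_of_evalFrom_four _ _ h
  refine ⟨a + 1, b + 1, c + 1, d + 1, by omega, by omega, by omega, by omega,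
    by simp [fourBlocks, List.replicate_succ], fun i hi hlt => ?_⟩
  have : i ≠ 0 := by rintro rfl; simp [hi] at h0
  have := hS₁ i hi
  have := hS₂ i hi
  have := hS₃ i hi
  have := hS₄ i hi
  simp at hlt
  omega

theorem markWord_fourBlocks_mem_accepts {a b c d : ℕ} (ha : 0 < a) (hb : 0 < b) (hc : 0 < c)
    (hd : 0 < d) (hS : ∀ i ∈ S, i < a + b + c + d → i = a ∨ i = a + b ∨ i = a + b + c) :
    markWord (fourBlocks a b c d) S ∈ blockDFA.accepts := by
  have avoid : ∀ j ∈ S, a + b + c + d ≤ j ∨ j = a ∨ j = a + b ∨ j = a + b + c :=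
    fun j hj => (le_or_gt _ j).imp_right (hS j hj)
  obtain ⟨a, rfl⟩ := Nat.exists_eq_add_one.mpr ha
  obtain ⟨b, rfl⟩ := Nat.exists_eq_add_one.mpr hb
  obtain ⟨c, rfl⟩ := Nat.exists_eq_add_one.mpr hc
  obtain ⟨d, rfl⟩ := Nat.exists_eq_add_one.mpr hd
  have h0 : 0 ∉ S := fun h0 => by have := avoid 0 h0; omega
  show blockDFA.evalFrom 0 (markWordFrom _ S 0) = 4
  rw [fourBlocks_succ, List.replicate_succ, List.cons_append, markWordFrom_cons,
    DFA.evalFrom_cons, decide_eq_false h0,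
    evalFrom_markWordFrom_replicate_append_cons (q := 2) _ rfl (by decide)
      (fun j hj => by have := avoid j hj; omega),
    evalFrom_markWordFrom_replicate_append_cons (q := 3) _ rfl (by decide)
      (fun j hj => by have := avoid j hj; omega),
    evalFrom_markWordFrom_replicate_append_cons (q := 4) _ rfl (by decide)
      (fun j hj => by have := avoid j hj; omega),
    ← List.append_nil (List.replicate d true),
    evalFrom_markWordFrom_replicate_append _ rfl _ (fun j hj => by have := avoid j hj; omega)]
  rfl

theorem mem_L3_of_mem_accepts_of_subset_union {w : List Bool} {m : ℕ} {S S' : Finset ℕ}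
    (hm : 0 < m) (hw : w.length = 4 * m) (hS : markWord w S ∈ blockDFA.accepts)
    (hS' : markWord w S' ∈ blockDFA.accepts) (hcover : {m, 2 * m, 3 * m} ⊆ S ∪ S') :
    w ∈ L3 := by
  obtain ⟨a, b, c, d, -, hb, hc, hd, rfl, hdots⟩ := exists_fourBlocks_of_mem_accepts hS
  obtain ⟨a', b', c', d', -, hb', hc', hd', hw', hdots'⟩ := exists_fourBlocks_of_mem_accepts hS'
  obtain ⟨rfl, rfl, rfl, rfl⟩ := fourBlocks_inj hb hc hd hb' hc' hd' hw'
  have hstart :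
      ∀ i ∈ ({m, 2 * m, 3 * m} : Finset ℕ), i = a ∨ i = a + b ∨ i = a + b + c := by
    intro i hi
    have hlt : i < (fourBlocks a b c d).length := by simp at hi; omega
    rcases Finset.mem_union.1 (hcover hi) with h | h
    · exact hdots i h hlt
    · exact hdots' i h hlt
  rw [length_fourBlocks] at hw
  have := hstart m (by simp)
  have := hstart (2 * m) (by simp)
  have := hstart (3 * m) (by simp)
  obtain ⟨rfl, rfl, rfl, rfl⟩ : b = a ∧ c = a ∧ d = a ∧ m = a := by omega
  exact ⟨m, hm, rfl⟩

def pairs (m : ℕ) : Finset (Finset ℕ) :=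
  {{m, 2 * m}, {m, 3 * m}, {2 * m, 3 * m}}

def advice (n : ℕ) : Finset (Finset ℕ) :=
  if 0 < n ∧ 4 ∣ n then pairs (n / 4) else {if n = 0 then ∅ else {0}}

theorem card_pairs {m : ℕ} (hm : 0 < m) : #(pairs m) = 3 := by
  rw [Finset.card_eq_three]
  refine ⟨_, _, _, fun h => ?_, fun h => ?_, fun h => ?_, rfl⟩ <;>
    have := congrArg (m ∈ ·) h <;> have := congrArg (2 * m ∈ ·) h <;> simp at * <;> omega

theorem subset_union_of_mem_pairs {m : ℕ} {S S' : Finset ℕ} (hS : S ∈ pairs m)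
    (hS' : S' ∈ pairs m) (hne : S ≠ S') : {m, 2 * m, 3 * m} ⊆ S ∪ S' := by
  simp only [pairs, Finset.mem_insert, Finset.mem_singleton] at hS hS'
  rcases hS with rfl | rfl | rfl <;> rcases hS' with rfl | rfl | rfl <;>
    first
    | exact absurd rfl hne
    | intro i; simp only [Finset.mem_insert, Finset.mem_singleton, Finset.mem_union]; tauto

theorem mem_advice {n : ℕ} {S : Finset ℕ} (hS : S ∈ advice n) :
    (∀ i ∈ S, i < n) ∧ #S ≤ 2 := by
  unfold advice at hS
  split_ifs at hS with hn h0 <;> simp only [pairs, Finset.mem_insert, Finset.mem_singleton] at hS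
  · rcases hS with rfl | rfl | rfl <;>
      exact ⟨fun i hi => by simp at hi; omega, Finset.card_le_two⟩
  · simp [hS]
  · exact ⟨fun i hi => by simp [hS] at hi; omega, by simp [hS]⟩

theorem markWord_notMem_accepts_of_zero_mem {w : List Bool} (h : 0 < w.length → 0 ∈ S) :
    markWord w S ∉ blockDFA.accepts := fun hacc => by
  obtain ⟨a, b, c, d, ha, -, -, -, rfl, hdots⟩ := exists_fourBlocks_of_mem_accepts hacc
  have hpos : 0 < (fourBlocks a b c d).length := by rw [length_fourBlocks]; omega
  have := hdots 0 (h hpos) hpos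
  omega

theorem advice_four_mul {m : ℕ} (hm : 0 < m) : advice (4 * m) = pairs m := by
  rw [advice, if_pos ⟨by omega, dvd_mul_right 4 m⟩, Nat.mul_div_cancel_left m (by norm_num)]

open scoped Classical in
theorem filter_advice_accepts_of_mem {w : List Bool} (hw : w ∈ L3) :
    (advice w.length).filter (markWord w · ∈ blockDFA.accepts) = advice w.length := by
  obtain ⟨m, hm, hw⟩ := hw
  obtain rfl : w = fourBlocks m m m m := hw
  rw [length_fourBlocks, show m + m + m + m = 4 * m by ring, advice_four_mul hm]
  refine Finset.filter_true_of_mem fun S hS => markWord_fourBlocks_mem_accepts hm hm hm hm ?_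
  simp only [pairs, Finset.mem_insert, Finset.mem_singleton] at hS
  rcases hS with rfl | rfl | rfl <;> intro i hi _ <;> simp at hi <;> omega

open scoped Classical in
theorem two_mul_card_advice_le_three_mul_card_rejects {w : List Bool} (hw : w ∉ L3) :
    2 * #(advice w.length) ≤
      3 * #((advice w.length).filter (markWord w · ∉ blockDFA.accepts)) := by
  by_cases hn : 0 < w.length ∧ 4 ∣ w.length
  · obtain ⟨m, hlen⟩ := hn.2
    have hm : 0 < m := by omega
    rw [hlen, advice_four_mul hm]
    have hacc : #((pairs m).filter (markWord w · ∈ blockDFA.accepts)) ≤ 1 :=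
      Finset.card_le_one.2 fun S hS S' hS' => by
        by_contra hne
        rw [Finset.mem_filter] at hS hS'
        exact hw (mem_L3_of_mem_accepts_of_subset_union hm hlen hS.2 hS'.2
          (subset_union_of_mem_pairs hS.1 hS'.1 hne))
    have hsplit := Finset.card_filter_add_card_filter_not (s := pairs m)
      (markWord w · ∈ blockDFA.accepts)
    rw [card_pairs hm] at hsplit ⊢
    omega
  · rw [advice, if_neg hn, Finset.filter_true_of_mem fun S hS => ?_]
    · simp
    rw [Finset.mem_singleton] at hS
    exact hS ▸ markWord_notMem_accepts_of_zero_mem fun h => by simp [h.ne']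

end L3

/-- `L_3` is recognized with bounded error using randomized advice
of at most `2` inkdots. -/
theorem L3_mem_randomized_two_inkdots : RecognizedWithRandomInkdots L3 2 :=
  recognizedWithRandomInkdots_of_uniform L3.blockDFA L3.advice
    (fun n => by unfold L3.advice; split_ifs <;> simp [L3.pairs])
    (fun _ _ => L3.mem_advice)
    (fun w hw => by rw [L3.filter_advice_accepts_of_mem hw]; omega)
    (fun _ => L3.two_mul_card_advice_le_three_mul_card_rejects)
end

section
/- Let g : ℕ → ℕ satisfy g(n) ≥ 1 for n ≥ 1, g(n) tends to infinity, and g(n)/n tends to 0. Define L_g over the alphabet {#,0,1} as the set of strings of the form s_1 # s_2 # ⋯ # s_m #^j with m ≥ 1 and j ≥ 1 such that, letting n denote the total length of the string: each subword s_i is of the form 0^* 1 0^* and has length exactly g(n), and, letting p_i denote the (1-based) position of the unique symbol 1 within s_i, |p_i − p_{i−1}| ≤ 1 for all i = 2,…,m. Then L_g is not recognized by any deterministic finite automaton with a t-ary advice track, for any t ≥ 1. -/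
/-- `L` is recognized by a deterministic finite automaton with a `t`-ary advice track. -/
def RecognizedWithAdviceTrack {α : Type*} (L : Set (List α)) (t : ℕ) : Prop :=
  ∃ (σ : Type) (_ : Fintype σ) (M : DFA (α × Fin t) σ) (h : (n : ℕ) → Fin n → Fin t),
    ∀ w : List α, w ∈ L ↔
      (List.ofFn (fun i : Fin w.length => (w.get i, h w.length i))) ∈ M.accepts

/-- The three-letter alphabet `{#, 0, 1}`. -/
inductive TSym : Type
  | hash : TSym
  | zero : TSym
  | one : TSym
  deriving DecidableEq

instance : Fintype TSym where
  elems := {TSym.hash, TSym.zero, TSym.one}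
  complete := fun x => by cases x <;> simp

/-- The language `L_g` over `{#,0,1}`: strings of the form `s_1 # s_2 # ⋯ # s_m #^j`
with `m ≥ 1` and `j ≥ 1` trailing `#`s, where (letting `n` be the total length of the
string) each subword `s_i` has the form `0^(p_i - 1) 1 0^(g n - p_i)` of length exactly
`g n` (so `1 ≤ p_i ≤ g n`, `p_i` being the 1-based position of the unique `1` in `s_i`),
and `|p_i − p_{i−1}| ≤ 1` for `i = 2, …, m`. -/
def Lg (g : ℕ → ℕ) : Set (List TSym) :=
  { w | ∃ (m j : ℕ) (p : ℕ → ℕ), 1 ≤ m ∧ 1 ≤ j ∧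
      (∀ i < m, 1 ≤ p i ∧ p i ≤ g w.length) ∧
      (∀ i, i + 1 < m → p (i + 1) ≤ p i + 1 ∧ p i ≤ p (i + 1) + 1) ∧
      w = (List.ofFn (fun i : Fin m =>
              List.replicate (p i - 1) TSym.zero ++ [TSym.one] ++
              List.replicate (g w.length - p i) TSym.zero ++ [TSym.hash])).flatten ++
          List.replicate (j - 1) TSym.hash }

/-!
Let `N` be the number of states. Pick a length `n` with `G = g n ≥ 2N + 1` and `4G < n`, so that
two blocks of length `G + 1` followed by some `#`s make a word of length `n`. On words of length `n`
the advice is one fixed word, so the state reached after the first block depends only on that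
block. Among the `N + 1` blocks with the `1` at positions `1, 3, …, 2N + 1`, two (at `a ≠ b`) lead
to the same state, so the automaton cannot separate `block a ++ block b ++ #^r` from
`block b ++ block b ++ #^r`; but the latter lies in `L_g` and the former does not, as `|a - b| ≥ 2`.
-/

lemma List.ofFn_prod_get_eq_zip {α β : Type*} (w : List α) (f : Fin w.length → β) :
    List.ofFn (fun i => (w.get i, f i)) = w.zip (List.ofFn f) :=
  List.ext_getElem (by simp) fun i _ _ => by simp [List.getElem_zip]

theorem RecognizedWithAdviceTrack.exists_ne_append_mem_iff {α : Type*} {L : Set (List α)} {t : ℕ}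
    (hL : RecognizedWithAdviceTrack L t) :
    ∃ N : ℕ, ∀ (ι : Type) [Fintype ι], N < Fintype.card ι → ∀ (k m : ℕ) (u : ι → List α),
      (∀ i, (u i).length = k) →
        ∃ i j, i ≠ j ∧ ∀ v : List α, v.length = m → (u i ++ v ∈ L ↔ u j ++ v ∈ L) := by
  obtain ⟨σ, _, M, h, hM⟩ := hL
  refine ⟨Fintype.card σ, fun ι _ hι k m u hu => ?_⟩
  set advice := List.ofFn (h (k + m))
  have accepts_iff (i : ι) (v : List α) (hv : v.length = m) : u i ++ v ∈ L ↔
      v.zip (advice.drop k) ∈ M.acceptsFrom (M.eval ((u i).zip (advice.take k))) := by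
    have hlen : (u i ++ v).length = k + m := by simp [hu, hv]
    have hsplit : (u i ++ v).zip advice =
        (u i).zip (advice.take k) ++ v.zip (advice.drop k) := by
      conv_lhs => rw [← List.take_append_drop k advice]
      exact List.zip_append (by simp [hu, advice])
    rw [hM, List.ofFn_prod_get_eq_zip, hlen, hsplit]
    exact Iff.of_eq (congrArg (· ∈ M.accept) (M.evalFrom_of_append _ _ _))
  obtain ⟨i, j, hij, hstate⟩ := Fintype.exists_ne_map_eq_of_card_lt
    (fun i => M.eval ((u i).zip (advice.take k))) hι
  exact ⟨i, j, hij, fun v hv => by rw [accepts_iff i v hv, accepts_iff j v hv, hstate]⟩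

namespace Lg

def block (G p : ℕ) : List TSym :=
  List.replicate (p - 1) TSym.zero ++ [TSym.one] ++ List.replicate (G - p) TSym.zero ++ [TSym.hash]

lemma length_block {G p : ℕ} (hp : 1 ≤ p) (hpG : p ≤ G) : (block G p).length = G + 1 := by
  simp only [block, List.length_append, List.length_replicate, List.length_singleton]
  omega

lemma count_one_block (G p : ℕ) : (block G p).count TSym.one = 1 := by
  simp [block, List.count_replicate]

lemma idxOf_one_block (G p : ℕ) : (block G p).idxOf TSym.one = p - 1 := by
  rw [block, List.append_assoc, List.append_assoc, List.idxOf_append_of_notMem (by simp)]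
  simp

lemma block_injOn (G : ℕ) : Set.InjOn (block G) (Set.Ici 1) := fun a ha b hb hab => by
  have := congrArg (List.idxOf TSym.one) hab
  simp only [idxOf_one_block] at this
  simp only [Set.mem_Ici] at ha hb
  omega

lemma mem_iff {g : ℕ → ℕ} {w : List TSym} : w ∈ Lg g ↔ ∃ (m j : ℕ) (p : ℕ → ℕ), 1 ≤ m ∧ 1 ≤ j ∧
      (∀ i < m, 1 ≤ p i ∧ p i ≤ g w.length) ∧
      (∀ i, i + 1 < m → p (i + 1) ≤ p i + 1 ∧ p i ≤ p (i + 1) + 1) ∧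
      w = (List.ofFn fun i : Fin m => block (g w.length) (p i)).flatten ++
        List.replicate (j - 1) TSym.hash :=
  Iff.rfl

lemma block_append_block_mem {g : ℕ → ℕ} {G b r : ℕ} (hb : 1 ≤ b) (hbG : b ≤ G)
    (hG : g (block G b ++ (block G b ++ List.replicate r TSym.hash)).length = G) :
    block G b ++ (block G b ++ List.replicate r TSym.hash) ∈ Lg g := by
  refine mem_iff.2 ⟨2, r + 1, fun _ => b, Nat.le_succ 1, le_add_self,
    fun _ _ => ⟨hb, hG.symm ▸ hbG⟩, fun _ _ => ⟨Nat.le_succ b, Nat.le_succ b⟩, ?_⟩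
  rw [hG]
  simp [List.ofFn_succ]

lemma le_succ_of_block_append_block_mem {g : ℕ → ℕ} {G a b r : ℕ} (ha : 1 ≤ a) (haG : a ≤ G)
    (hb : 1 ≤ b) (hbG : b ≤ G)
    (hG : g (block G a ++ (block G b ++ List.replicate r TSym.hash)).length = G)
    (hw : block G a ++ (block G b ++ List.replicate r TSym.hash) ∈ Lg g) :
    b ≤ a + 1 ∧ a ≤ b + 1 := by
  obtain ⟨m, j, p, -, -, hp, hadj, hw⟩ := mem_iff.1 hw
  rw [hG] at hp hw
  have hm : m = 2 := by
    have := congrArg (List.count TSym.one) hw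
    simpa [count_one_block, List.count_flatten, List.count_replicate, List.sum_ofFn,
      Function.comp_def] using this.symm
  subst hm
  obtain ⟨hp0, hp0G⟩ := hp 0 two_pos
  obtain ⟨hp1, hp1G⟩ := hp 1 one_lt_two
  simp only [List.ofFn_succ, List.ofFn_zero, List.flatten_cons, List.flatten_nil,
    List.append_nil, List.append_assoc, Fin.val_zero, Fin.val_succ, zero_add] at hw
  obtain ⟨ha0, hw⟩ := List.append_inj hw (by rw [length_block ha haG, length_block hp0 hp0G])
  obtain ⟨hb1, -⟩ := List.append_inj hw (by rw [length_block hb hbG, length_block hp1 hp1G])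
  rw [block_injOn G ha hp0 ha0, block_injOn G hb hp1 hb1]
  exact hadj 0 one_lt_two

end Lg

open Filter in
lemma eventually_le_and_mul_lt {g : ℕ → ℕ} (hg1 : Tendsto g atTop atTop)
    (hg2 : Tendsto (fun n => (g n : ℝ) / n) atTop (nhds 0)) (K c : ℕ) :
    ∀ᶠ n in atTop, K ≤ g n ∧ c * g n < n := by
  filter_upwards [hg1.eventually_ge_atTop K,
    hg2.eventually_lt_const (show (0 : ℝ) < 1 / (c + 1) by positivity),
    eventually_gt_atTop 0] with n hK hlt hn
  refine ⟨hK, ?_⟩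
  rw [div_lt_div_iff₀ (by positivity) (by positivity), one_mul] at hlt
  have : (c * g n : ℝ) < n := by nlinarith [(g n).cast_nonneg (α := ℝ)]
  exact_mod_cast this

open Filter in
theorem Lg_not_mem_advice_track_general (g : ℕ → ℕ)
    (hg1 : Tendsto g atTop atTop)
    (hg2 : Tendsto (fun n => (g n : ℝ) / n) atTop (nhds 0))
    (t : ℕ) :
    ¬ RecognizedWithAdviceTrack (Lg g) t := by
  intro hL
  obtain ⟨N, hN⟩ := hL.exists_ne_append_mem_iff
  obtain ⟨n, hGN, hGn⟩ := (eventually_le_and_mul_lt hg1 hg2 (2 * N + 1) 4).exists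
  set G := g n
  have hodd (i : Fin (N + 1)) : 1 ≤ 2 * (i : ℕ) + 1 ∧ 2 * (i : ℕ) + 1 ≤ G := by omega
  obtain ⟨i, j, hij, hiff⟩ := hN (Fin (N + 1)) (by simp) (G + 1) (n - (G + 1))
    (fun i => Lg.block G (2 * i + 1)) fun i => Lg.length_block (hodd i).1 (hodd i).2
  set v := Lg.block G (2 * j + 1) ++ List.replicate (n - 2 * (G + 1)) TSym.hash
  have hv : v.length = n - (G + 1) := by
    simp only [v, List.length_append, List.length_replicate,
      Lg.length_block (hodd j).1 (hodd j).2]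
    omega
  have hlen (a : ℕ) (ha : 1 ≤ a) (haG : a ≤ G) : (Lg.block G a ++ v).length = n := by
    rw [List.length_append, Lg.length_block ha haG, hv]
    omega
  have hmem := (hiff v hv).2
    (Lg.block_append_block_mem (hodd j).1 (hodd j).2 (by rw [hlen _ (hodd j).1 (hodd j).2]))
  have hclose := Lg.le_succ_of_block_append_block_mem (hodd i).1 (hodd i).2 (hodd j).1 (hodd j).2
    (by rw [hlen _ (hodd i).1 (hodd i).2]) hmem
  have hne := Fin.val_injective.ne hij
  omega

open Filter in
/-- for `g ∈ ω(1) ∩ o(n)` with `g(n) ≥ 1` for `n ≥ 1`, the language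
`L_g` is not recognized by any dfa with a `t`-ary advice track, for any `t ≥ 1`. -/
theorem Lg_not_mem_advice_track (g : ℕ → ℕ)
    (hg0 : ∀ n, 1 ≤ n → 1 ≤ g n)
    (hg1 : Tendsto g atTop atTop)
    (hg2 : Tendsto (fun n => (g n : ℝ) / n) atTop (nhds 0))
    (t : ℕ) (ht : 1 ≤ t) :
    ¬ RecognizedWithAdviceTrack (Lg g) t :=
  Lg_not_mem_advice_track_general g hg1 hg2 t
end
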